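/- arXiv:2603.24252 — 2 statements merged into one kernel-verified Lean document; each statement's English description precedes it below -/
import Mathlib

section
/- Let α > 0, 0 < β < 1 and γ, δ be real. Then for every t > 0, the function s ↦ s^{1−β} E_{α,2−β}^{−γ}(δ s^α) is differentiable at t with derivative t^{−β} E_{α,1−β}^{−γ}(δ t^α). Consequently, the Riemann–Liouville-type Prabhakar derivative of the constant function 1, namely d/dt ∫₀ᵗ (t−s)^{−β} E_{α,1−β}^{−γ}(δ(t−s)^α) ds, equals t^{−β} E_{α,1−β}^{−γ}(δ t^α) for t > 0. -/
/-- The three-parameter Mittag-Leffler (Prabhakar) function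
`E_{α,β}^{γ}(z) = ∑_{k=0}^∞ (γ)_k z^k / (Γ(αk+β) k!)`. -/
noncomputable def prabE (α β γ z : ℝ) : ℝ :=
  ∑' k : ℕ, (ascPochhammer ℝ k).eval γ * z ^ k /
    (Real.Gamma (α * k + β) * (k.factorial : ℝ))

/-!
Write `c_k(b) = (γ)_k δ^k / (Γ(αk + b) k!)`, so that for `s > 0`
`s^(b-1) E_{α,b}^γ(δ s^α) = ∑ c_k(b) s^(αk+b-1)`. The functional equation `Γ(x+1) = x Γ(x)` gives
`c_k(b+1) (αk+b) = c_k(b)`, so differentiating the series of index `b + 1` term by term, or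
integrating the series of index `b` term by term from `0`, shifts the index by one.
Both interchanges are justified because the Prabhakar series converges absolutely for every `z`:
`|(γ)_k| ≤ (|γ|+1)^k k!` and `Γ(x) ≥ e^{-C} C^{x-1}` for `x ≥ 1` and any `C > 0`, so with `C^α`
large the terms are dominated by a geometric series. After `s ↦ r - s`, the integral in the
second claim is `r^{1-β} E_{α,2-β}^{-γ}(δ r^α)`, the function of the first claim.
-/

open Real MeasureTheory Set Filter

noncomputable def prabTerm (α β γ z : ℝ) (k : ℕ) : ℝ :=
  (ascPochhammer ℝ k).eval γ * z ^ k / (Gamma (α * k + β) * k.factorial)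

theorem prabTerm_mul_pow (α β γ z w : ℝ) (k : ℕ) :
    prabTerm α β γ (z * w) k = prabTerm α β γ z k * w ^ k := by
  simp only [prabTerm, mul_pow]
  ring

theorem prabTerm_add_one_mul (α β γ z : ℝ) (k : ℕ) :
    prabTerm α (β + 1) γ z k * (α * k + β) = prabTerm α β γ z k := by
  rcases eq_or_ne (α * k + β) 0 with h | h
  · simp [prabTerm, h]
  · rw [prabTerm, prabTerm, ← add_assoc, Gamma_add_one h]
    rcases eq_or_ne (Gamma (α * k + β)) 0 with hΓ | hΓ
    · simp [hΓ]
    · field_simp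

theorem prabTerm_mul_rpow (α β γ δ e : ℝ) (k : ℕ) {s : ℝ} (hs : 0 < s) :
    prabTerm α β γ δ k * s ^ (α * k + e) = s ^ e * prabTerm α β γ (δ * s ^ α) k := by
  rw [prabTerm_mul_pow, rpow_add hs, rpow_mul_natCast hs.le]
  ring

theorem rpow_mul_prabE_eq_tsum (α β γ δ e : ℝ) {s : ℝ} (hs : 0 < s) :
    s ^ e * prabE α β γ (δ * s ^ α) = ∑' k : ℕ, prabTerm α β γ δ k * s ^ (α * k + e) := by
  simp only [prabTerm_mul_rpow _ _ _ _ _ _ hs, tsum_mul_left]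
  rfl

theorem abs_ascPochhammer_eval_le (x : ℝ) (k : ℕ) :
    |(ascPochhammer ℝ k).eval x| ≤ (|x| + 1) ^ k * k.factorial := by
  induction k with
  | zero => simp
  | succ k ih =>
    have hstep : |x + k| ≤ (|x| + 1) * (k + 1) := by
      have := abs_add_le x k
      rw [Nat.abs_cast] at this
      nlinarith [abs_nonneg x, (Nat.cast_nonneg k : (0 : ℝ) ≤ k)]
    rw [ascPochhammer_succ_eval, abs_mul, Nat.factorial_succ, pow_succ]
    push_cast
    calc |(ascPochhammer ℝ k).eval x| * |x + k|
        ≤ (|x| + 1) ^ k * k.factorial * ((|x| + 1) * (k + 1)) :=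
          mul_le_mul ih hstep (abs_nonneg _) (by positivity)
      _ = _ := by ring

theorem exp_neg_mul_rpow_le_Gamma {C x : ℝ} (hC : 0 < C) (hx : 1 ≤ x) :
    exp (-C) * C ^ (x - 1) ≤ Gamma x := by
  have hint := GammaIntegral_convergent (s := x) (by linarith)
  rw [Gamma_eq_integral (by linarith)]
  calc exp (-C) * C ^ (x - 1) = ∫ t in Ioi C, C ^ (x - 1) * exp (-t) := by
        rw [integral_const_mul, integral_exp_neg_Ioi, mul_comm]
    _ ≤ ∫ t in Ioi C, exp (-t) * t ^ (x - 1) := by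
        refine setIntegral_mono_on ((integrableOn_exp_neg_Ioi C).const_mul _)
          (hint.mono_set (Ioi_subset_Ioi hC.le)) measurableSet_Ioi fun t ht => ?_
        rw [mul_comm]
        gcongr
        exact ht.le
    _ ≤ ∫ t in Ioi 0, exp (-t) * t ^ (x - 1) :=
        setIntegral_mono_set hint
          (ae_restrict_of_forall_mem measurableSet_Ioi fun t (ht : 0 < t) => by positivity)
          (Ioi_subset_Ioi hC.le).eventuallyLE

theorem summable_norm_prabTerm {α : ℝ} (hα : 0 < α) (β γ z : ℝ) :
    Summable fun k => ‖prabTerm α β γ z k‖ := by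
  set M := (|γ| + 1) * |z|
  set C := (M + 1) ^ α⁻¹
  have hC : 0 < C := by positivity
  have hCα : C ^ α = M + 1 := by
    rw [← rpow_mul (by positivity), inv_mul_cancel₀ hα.ne', rpow_one]
  have hgeom : Summable fun k : ℕ => exp C * C ^ (1 - β) * (M / (M + 1)) ^ k :=
    (summable_geometric_of_lt_one (by positivity)
      ((div_lt_one (by positivity)).2 (lt_add_one M))).mul_left _
  refine hgeom.of_norm_bounded_eventually_nat ?_
  have hlarge : ∀ᶠ k : ℕ in atTop, 1 ≤ α * k + β :=
    (tendsto_atTop_add_const_right _ β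
      (tendsto_natCast_atTop_atTop.const_mul_atTop hα)).eventually_ge_atTop 1
  filter_upwards [hlarge] with k hk
  have hΓ : exp (-C) * ((M + 1) ^ k * C ^ (β - 1)) ≤ Gamma (α * k + β) := by
    have := exp_neg_mul_rpow_le_Gamma hC hk
    rwa [show α * k + β - 1 = α * k + (β - 1) by ring, rpow_add hC, rpow_mul_natCast hC.le,
      hCα] at this
  rw [norm_norm, prabTerm, norm_div, norm_mul, norm_mul, norm_pow, Real.norm_natCast,
    Real.norm_eq_abs, Real.norm_eq_abs, Real.norm_eq_abs,
    abs_of_pos (lt_of_lt_of_le (by positivity) hΓ)]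
  calc |(ascPochhammer ℝ k).eval γ| * |z| ^ k / (Gamma (α * k + β) * k.factorial)
      ≤ (|γ| + 1) ^ k * k.factorial * |z| ^ k /
          (exp (-C) * ((M + 1) ^ k * C ^ (β - 1)) * k.factorial) := by
        gcongr
        exact abs_ascPochhammer_eval_le γ k
    _ = exp C * C ^ (1 - β) * (M / (M + 1)) ^ k := by
        rw [exp_neg, show 1 - β = -(β - 1) by ring, rpow_neg hC.le, div_pow, mul_pow]
        field_simp

theorem hasDerivAt_prabTerm_mul_rpow (α β γ δ : ℝ) (k : ℕ) {y : ℝ} (hy : 0 < y) :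
    HasDerivAt (fun s => prabTerm α (β + 1) γ δ k * s ^ (α * k + β))
      (prabTerm α β γ δ k * y ^ (α * k + β - 1)) y := by
  have := (hasDerivAt_rpow_const (p := α * k + β) (Or.inl hy.ne')).const_mul
    (prabTerm α (β + 1) γ δ k)
  rwa [← mul_assoc, prabTerm_add_one_mul] at this

theorem rpow_le_add_rpow_of_mem_Icc {a c y : ℝ} (ha : 0 < a) (hy : y ∈ Icc a c) (e : ℝ) :
    y ^ e ≤ a ^ e + c ^ e := by
  rcases le_total 0 e with he | he
  · have := rpow_le_rpow (ha.le.trans hy.1) hy.2 he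
    linarith [rpow_nonneg ha.le e]
  · have := rpow_le_rpow_of_nonpos ha hy.1 he
    linarith [rpow_nonneg (ha.le.trans (hy.1.trans hy.2)) e]

theorem hasDerivAt_rpow_mul_prabE {α : ℝ} (hα : 0 < α) (β γ δ : ℝ) {t : ℝ} (ht : 0 < t) :
    HasDerivAt (fun s => s ^ β * prabE α (β + 1) γ (δ * s ^ α))
      (t ^ (β - 1) * prabE α β γ (δ * t ^ α)) t := by
  have hmem : t ∈ Ioo (t / 2) (2 * t) := ⟨by linarith, by linarith⟩
  have hbound : ∀ k : ℕ, ∀ y ∈ Ioo (t / 2) (2 * t),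
      ‖prabTerm α β γ δ k * y ^ (α * k + β - 1)‖ ≤
        ‖prabTerm α β γ (δ * (2 * t) ^ α) k‖ * ((t / 2) ^ (β - 1) + (2 * t) ^ (β - 1)) := by
    intro k y hy
    have hy0 : 0 < y := by linarith [hy.1]
    rw [prabTerm_mul_pow, norm_mul, norm_mul, norm_pow,
      Real.norm_of_nonneg (rpow_nonneg hy0.le _),
      Real.norm_of_nonneg (rpow_nonneg (by positivity : (0 : ℝ) ≤ 2 * t) α), mul_assoc,
      ← rpow_mul_natCast (by positivity), add_sub_assoc, rpow_add hy0]
    gcongr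
    · exact hy.2.le
    · exact rpow_le_add_rpow_of_mem_Icc (by positivity) (Ioo_subset_Icc_self hy) _
  have hsum := hasDerivAt_tsum_of_isPreconnected
    ((summable_norm_prabTerm hα β γ _).mul_right _) isOpen_Ioo (convex_Ioo _ _).isPreconnected
    (fun k y hy => hasDerivAt_prabTerm_mul_rpow α β γ δ k (by linarith [hy.1] : 0 < y)) hbound
    hmem ?_ hmem
  · simp only [add_sub_assoc] at hsum
    rw [rpow_mul_prabE_eq_tsum _ _ _ _ _ ht]
    refine hsum.congr_of_eventuallyEq ?_
    filter_upwards [Ioi_mem_nhds ht] with s hs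
    exact rpow_mul_prabE_eq_tsum _ _ _ _ _ hs
  · simp only [prabTerm_mul_rpow _ _ _ _ _ _ ht]
    exact (summable_norm_prabTerm hα _ γ _).of_norm.mul_left _

theorem integral_prabTerm_mul_rpow {α β : ℝ} (hα : 0 ≤ α) (hβ : 0 < β) (γ δ : ℝ) (k : ℕ) (r : ℝ) :
    ∫ u in (0 : ℝ)..r, prabTerm α β γ δ k * u ^ (α * k + β - 1) =
      prabTerm α (β + 1) γ δ k * r ^ (α * k + β) := by
  have hp : 0 < α * k + β := by positivity
  rw [intervalIntegral.integral_const_mul, integral_rpow (Or.inl (by linarith)),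
    sub_add_cancel, zero_rpow hp.ne', sub_zero, ← prabTerm_add_one_mul]
  field_simp

theorem integral_rpow_mul_prabE {α β : ℝ} (hα : 0 < α) (hβ : 0 < β) (γ δ : ℝ) {r : ℝ} (hr : 0 < r) :
    ∫ u in (0 : ℝ)..r, u ^ (β - 1) * prabE α β γ (δ * u ^ α) =
      r ^ β * prabE α (β + 1) γ (δ * r ^ α) := by
  have hint : ∀ k : ℕ, IntegrableOn (fun u => prabTerm α β γ δ k * u ^ (α * k + β - 1)) (Ioc 0 r) :=
    fun k => ((intervalIntegral.intervalIntegrable_rpow' (by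
      have : 0 ≤ α * k := by positivity
      linarith)).1.const_mul _)
  have hnorm : ∀ k : ℕ, ∫ u in Ioc 0 r, ‖prabTerm α β γ δ k * u ^ (α * k + β - 1)‖ =
      r ^ β * ‖prabTerm α (β + 1) γ (δ * r ^ α) k‖ := by
    intro k
    calc ∫ u in Ioc 0 r, ‖prabTerm α β γ δ k * u ^ (α * k + β - 1)‖
        = ∫ u in Ioc 0 r, ‖prabTerm α β γ δ k‖ * u ^ (α * k + β - 1) :=
          setIntegral_congr_fun measurableSet_Ioc fun u hu => by
            rw [norm_mul, Real.norm_of_nonneg (rpow_nonneg hu.1.le _)]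
      _ = ‖∫ u in (0 : ℝ)..r, prabTerm α β γ δ k * u ^ (α * k + β - 1)‖ := by
          rw [intervalIntegral.integral_const_mul, norm_mul, integral_const_mul,
            intervalIntegral.integral_of_le hr.le, Real.norm_of_nonneg
              (setIntegral_nonneg measurableSet_Ioc fun u hu => rpow_nonneg hu.1.le _)]
      _ = r ^ β * ‖prabTerm α (β + 1) γ (δ * r ^ α) k‖ := by
          rw [integral_prabTerm_mul_rpow hα.le hβ, prabTerm_mul_rpow _ _ _ _ _ _ hr, norm_mul,
            Real.norm_of_nonneg (rpow_nonneg hr.le _)]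
  rw [intervalIntegral.integral_of_le hr.le, rpow_mul_prabE_eq_tsum _ _ _ _ _ hr,
    setIntegral_congr_fun measurableSet_Ioc fun u hu => rpow_mul_prabE_eq_tsum α β γ δ _ hu.1]
  simp only [← add_sub_assoc]
  rw [← integral_tsum_of_summable_integral_norm hint
      (by simpa only [hnorm] using (summable_norm_prabTerm hα _ γ _).mul_left (r ^ β))]
  refine tsum_congr fun k => ?_
  rw [← intervalIntegral.integral_of_le hr.le, integral_prabTerm_mul_rpow hα.le hβ]

theorem prabhakar_deriv_of_one_general (α β γ δ : ℝ) (hα : 0 < α) (hβ1 : β < 1)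
    (t : ℝ) (ht : 0 < t) :
    HasDerivAt (fun s : ℝ => s ^ (1 - β) * prabE α (2 - β) (-γ) (δ * s ^ α))
      (t ^ (-β) * prabE α (1 - β) (-γ) (δ * t ^ α)) t ∧
    HasDerivAt (fun r : ℝ =>
        ∫ s in (0:ℝ)..r, (r - s) ^ (-β) * prabE α (1 - β) (-γ) (δ * (r - s) ^ α))
      (t ^ (-β) * prabE α (1 - β) (-γ) (δ * t ^ α)) t := by
  have hderiv := hasDerivAt_rpow_mul_prabE hα (1 - β) (-γ) δ ht
  rw [show 1 - β + 1 = 2 - β by ring, show 1 - β - 1 = -β by ring] at hderiv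
  refine ⟨hderiv, hderiv.congr_of_eventuallyEq ?_⟩
  filter_upwards [Ioi_mem_nhds ht] with r hr
  have hprimitive := integral_rpow_mul_prabE hα (sub_pos.2 hβ1) (-γ) δ hr
  rw [show 1 - β + 1 = 2 - β by ring, show 1 - β - 1 = -β by ring] at hprimitive
  rw [intervalIntegral.integral_comp_sub_left
    (fun u => u ^ (-β) * prabE α (1 - β) (-γ) (δ * u ^ α)) r, sub_self, sub_zero, hprimitive]

/-- For `α > 0`, `0 < β < 1` and `t > 0`, the function
`s ↦ s^{1−β} E_{α,2−β}^{−γ}(δ s^α)` is differentiable at `t` with derivative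
`t^{−β} E_{α,1−β}^{−γ}(δ t^α)`; consequently the Riemann–Liouville-type Prabhakar
derivative of the constant function `1`, namely
`d/dt ∫₀ᵗ (t−s)^{−β} E_{α,1−β}^{−γ}(δ(t−s)^α) ds`, equals
`t^{−β} E_{α,1−β}^{−γ}(δ t^α)` for `t > 0`. -/
theorem prabhakar_deriv_of_one (α β γ δ : ℝ) (hα : 0 < α) (hβ : 0 < β) (hβ1 : β < 1)
    (t : ℝ) (ht : 0 < t) :
    HasDerivAt (fun s : ℝ => s ^ (1 - β) * prabE α (2 - β) (-γ) (δ * s ^ α))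
      (t ^ (-β) * prabE α (1 - β) (-γ) (δ * t ^ α)) t ∧
    HasDerivAt (fun r : ℝ =>
        ∫ s in (0:ℝ)..r, (r - s) ^ (-β) * prabE α (1 - β) (-γ) (δ * (r - s) ^ α))
      (t ^ (-β) * prabE α (1 - β) (-γ) (δ * t ^ α)) t :=
  prabhakar_deriv_of_one_general α β γ δ hα hβ1 t ht
end

section
/- Let a > 0, α > 0, 0 < β < 1, γ, δ ∈ ℝ, β₁ = β/2, γ₁ = γ/2. Then for all 0 ≤ η < t and 0 < ξ < a, the Green's function vanishes on the lateral boundary: G(t,0,η,ξ) = 0 and G(t,a,η,ξ) = 0. -/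
/-- The Green's function
`G(t,x,η,ξ) = (1/2) ∑_{n∈ℤ} ∑_{k=0}^∞ ((−1)^k [|x−ξ+2na|^k − |x+ξ+2na|^k] / k!)
  (t−η)^{β₁−β₁k−1} E_{α,β₁−β₁k}^{γ₁−γ₁k}(δ(t−η)^α)`. -/
noncomputable def greenG (a α β₁ γ₁ δ t x η ξ : ℝ) : ℝ :=
  (1 / 2) * ∑' n : ℤ, ∑' k : ℕ,
    (-1 : ℝ) ^ k * (|x - ξ + 2 * (n : ℝ) * a| ^ k - |x + ξ + 2 * (n : ℝ) * a| ^ k) /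
        (k.factorial : ℝ) *
      ((t - η) ^ (β₁ - β₁ * k - 1) * prabE α (β₁ - β₁ * k) (γ₁ - γ₁ * k) (δ * (t - η) ^ α))

lemma tsum_int_eq_zero_of_neg {f : ℤ → ℝ} (e : ℤ ≃ ℤ) (h : ∀ n, f (e n) = -f n) :
    ∑' n, f n = 0 := by
  have h1 : ∑' n, f (e n) = ∑' n, f n := e.tsum_eq f
  have h2 : ∑' n, f (e n) = ∑' n, -f n := tsum_congr h
  rw [tsum_neg] at h2
  linarith

/-- The Green's function vanishes on the lateral boundary: for `0 ≤ η < t` and `0 < ξ < a`,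
`G(t,0,η,ξ) = 0` and `G(t,a,η,ξ) = 0`. -/
theorem green_vanishes_on_boundary (a α β γ δ β₁ γ₁ : ℝ) (ha : 0 < a)
    (hα : 0 < α) (hβ : 0 < β) (hβ1 : β < 1) (hb : β₁ = β / 2) (hg : γ₁ = γ / 2)
    (t η ξ : ℝ) (hη : 0 ≤ η) (hηt : η < t) (hξ : ξ ∈ Set.Ioo 0 a) :
    greenG a α β₁ γ₁ δ t 0 η ξ = 0 ∧ greenG a α β₁ γ₁ δ t a η ξ = 0 := by
  constructor
  · unfold greenG
    rw [tsum_int_eq_zero_of_neg (Equiv.neg ℤ) ?_, mul_zero]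
    intro n
    rw [← tsum_neg]
    apply tsum_congr
    intro k
    have e1 : |(0:ℝ) - ξ + 2 * ((Equiv.neg ℤ n : ℤ) : ℝ) * a| = |(0:ℝ) + ξ + 2 * (n : ℝ) * a| := by
      simp only [Equiv.neg_apply]
      push_cast
      rw [show (0:ℝ) - ξ + 2 * (-(n : ℝ)) * a = -((0:ℝ) + ξ + 2 * (n : ℝ) * a) by ring, abs_neg]
    have e2 : |(0:ℝ) + ξ + 2 * ((Equiv.neg ℤ n : ℤ) : ℝ) * a| = |(0:ℝ) - ξ + 2 * (n : ℝ) * a| := by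
      simp only [Equiv.neg_apply]
      push_cast
      rw [show (0:ℝ) + ξ + 2 * (-(n : ℝ)) * a = -((0:ℝ) - ξ + 2 * (n : ℝ) * a) by ring, abs_neg]
    rw [e1, e2]
    ring
  · unfold greenG
    rw [tsum_int_eq_zero_of_neg (Equiv.subLeft (-1)) ?_, mul_zero]
    intro n
    rw [← tsum_neg]
    apply tsum_congr
    intro k
    have e1 : |a - ξ + 2 * ((Equiv.subLeft (-1) n : ℤ) : ℝ) * a| = |a + ξ + 2 * (n : ℝ) * a| := by
      simp only [Equiv.subLeft_apply]
      push_cast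
      rw [show a - ξ + 2 * (-1 - (n : ℝ)) * a = -(a + ξ + 2 * (n : ℝ) * a) by ring, abs_neg]
    have e2 : |a + ξ + 2 * ((Equiv.subLeft (-1) n : ℤ) : ℝ) * a| = |a - ξ + 2 * (n : ℝ) * a| := by
      simp only [Equiv.subLeft_apply]
      push_cast
      rw [show a + ξ + 2 * (-1 - (n : ℝ)) * a = -(a - ξ + 2 * (n : ℝ) * a) by ring, abs_neg]
    rw [e1, e2]
    ring
end
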